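/- Let u, w : Ω → ℝ be C² on a convex open set Ω ⊂ ℝⁿ, with w convex. Let Γ denote the convex envelope of u − w/2 on Ω. Then the measure ∇Γ(u − w/2)(E) of the gradient image of any Borel set E ⊂ Ω satisfies |∇Γ(u − w/2)(E)| = ∫_{E ∩ {Γ(u−w/2) = u−w/2}} det D²(u − w/2), i.e. the Monge–Ampère measure of the convex envelope is concentrated on the contact set and given there by the Hessian determinant of u − w/2. -/

import Mathlib

open Set MeasureTheory Metric Bornology Filter Matrix
open scoped RealInnerProductSpace Topology ENNReal

variable {n : ℕ}

local notation "X" => EuclideanSpace ℝ (Fin n)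

/-- A real-valued convex function on a bounded open convex set is bounded below. -/
lemma convexOn_bddBelow {Ω : Set X} (hΩo : IsOpen Ω) (hΩb : IsBounded Ω)
    {Γ : X → ℝ} (hΓ : ConvexOn ℝ Ω Γ) {x₀ : X} (hx₀ : x₀ ∈ Ω) :
    ∃ c : ℝ, ∀ z ∈ Ω, c ≤ Γ z := by
  obtain ⟨r, hr, hball⟩ := Metric.isOpen_iff.1 hΩo x₀ hx₀
  set ρ := r/2 with hρdef
  have hρ : 0 < ρ := by positivity
  have hKsub : closedBall x₀ ρ ⊆ Ω := fun y hy =>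
    hball (lt_of_le_of_lt (mem_closedBall.1 hy) (by simp [hρdef]; linarith))
  have hK : IsCompact (closedBall x₀ ρ) := isCompact_closedBall _ _
  have hKne : (closedBall x₀ ρ).Nonempty := ⟨x₀, mem_closedBall_self hρ.le⟩
  have hcont : ContinuousOn Γ (closedBall x₀ ρ) := (hΓ.continuousOn hΩo).mono hKsub
  obtain ⟨zM, hzM, hM⟩ := hK.exists_isMaxOn hKne hcont
  obtain ⟨zm, _, hm⟩ := hK.exists_isMinOn hKne hcont
  set M := Γ zM with hMdef
  obtain ⟨D, hD⟩ := (isBounded_iff_subset_closedBall x₀).1 hΩb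
  refine ⟨min (Γ zm) (Γ x₀ + (Γ x₀ - M) * (D / ρ)), fun z hz => ?_⟩
  rcases le_or_gt (dist z x₀) ρ with hcase | hcase
  · exact le_trans (min_le_left _ _) (hm (mem_closedBall.2 hcase))
  · refine le_trans (min_le_right _ _) ?_
    set d := dist z x₀ with hddef
    have hd0 : 0 < d := lt_trans hρ hcase
    have hdD : d ≤ D := mem_closedBall.1 (hD hz)
    have hD0 : 0 < D := lt_of_lt_of_le hd0 hdD
    set t := ρ / d with htdef
    have ht0 : 0 < t := by positivity
    have ht1 : t < 1 := (div_lt_one hd0).2 hcase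
    set y := x₀ - t • (z - x₀) with hydef
    have hyK : y ∈ closedBall x₀ ρ := by
      have : y - x₀ = (-t) • (z - x₀) := by rw [hydef]; module
      rw [mem_closedBall, dist_eq_norm, this, norm_smul]
      simp only [norm_neg, Real.norm_eq_abs, abs_of_pos ht0]
      rw [htdef]
      rw [show ‖z - x₀‖ = d by rw [hddef, dist_eq_norm]]
      field_simp
      exact le_rfl
    have hyΩ : y ∈ Ω := hKsub hyK
    have hcomb : (t/(1+t)) • z + (1/(1+t)) • y = x₀ := by
      rw [hydef]
      have h1t : (1:ℝ) + t ≠ 0 := by positivity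
      match_scalars <;> (field_simp; try ring)
    have hcvx := hΓ.2 hz hyΩ (by positivity : (0:ℝ) ≤ t/(1+t))
      (by positivity : (0:ℝ) ≤ 1/(1+t)) (by field_simp; ring)
    rw [hcomb] at hcvx
    simp only [smul_eq_mul] at hcvx
    have hyM : Γ y ≤ M := hM hyK
    have h1t : (0:ℝ) < 1 + t := by positivity
    have hkey : Γ x₀ + (Γ x₀ - M) / t ≤ Γ z := by
      have h2 : Γ x₀ * (1 + t) ≤ t * Γ z + Γ y := by
        have := hcvx
        have h3 : (t/(1+t)) * Γ z + (1/(1+t)) * Γ y = (t * Γ z + Γ y) / (1+t) := by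
          field_simp
        rw [h3] at this
        calc Γ x₀ * (1+t) ≤ ((t * Γ z + Γ y) / (1+t)) * (1+t) := by
              apply mul_le_mul_of_nonneg_right this h1t.le
          _ = t * Γ z + Γ y := by field_simp
      have h4 : Γ x₀ * (1+t) - M ≤ t * Γ z := by linarith
      calc Γ x₀ + (Γ x₀ - M)/t = (Γ x₀ * (1+t) - M)/t := by field_simp; ring
        _ ≤ (t * Γ z)/t := (div_le_div_iff_of_pos_right ht0).2 h4
        _ = Γ z := by field_simp
    refine le_trans ?_ hkey
    have hA : Γ x₀ - M ≤ 0 := by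
      have h5 := hM (mem_closedBall_self hρ.le)
      simp only [Set.mem_setOf_eq] at h5
      simp only [hMdef]; linarith
    have hinv : 1 / t ≤ D / ρ := by
      rw [htdef, one_div_div]
      exact (div_le_div_iff_of_pos_right hρ).2 hdD
    have : (Γ x₀ - M) * (D / ρ) ≤ (Γ x₀ - M) / t := by
      rw [div_eq_mul_one_div (Γ x₀ - M) t]
      exact mul_le_mul_of_nonpos_left hinv hA
    linarith

/-- At a contact point, the derivative of `v` is a subgradient of `Γ`. -/
lemma grad_mem_subgradient {Ω : Set X} (hΩo : IsOpen Ω) {Γ v : X → ℝ}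
    (hΓconv : ConvexOn ℝ Ω Γ) (hΓle : ∀ x ∈ Ω, Γ x ≤ v x)
    {x : X} (hx : x ∈ Ω) (hxc : Γ x = v x) {φ : X →L[ℝ] ℝ}
    (hφ : HasFDerivAt v φ x) :
    ∀ z ∈ Ω, Γ x + φ (z - x) ≤ Γ z := by
  intro z hz
  set d := z - x with hddef
  obtain ⟨ε, hε, hball⟩ := Metric.isOpen_iff.1 hΩo x hx
  set t₀ : ℝ := ε / (‖d‖ + 1) with ht₀def
  have ht₀ : 0 < t₀ := by positivity
  -- for 0 < t < t₀ : Γ z ≥ Γ x + (v x - v (x - t•d))/t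
  have key : ∀ t ∈ Ioo (0:ℝ) t₀, (v x - v (x - t • d))/t ≤ Γ z - Γ x := by
    intro t ht
    obtain ⟨ht0, htt⟩ := ht
    have hmem : x - t • d ∈ Ω := by
      apply hball
      rw [mem_ball, dist_eq_norm]
      have : x - t • d - x = (-t) • d := by module
      rw [this, norm_smul, Real.norm_eq_abs, abs_neg, abs_of_pos ht0]
      calc t * ‖d‖ ≤ t * (‖d‖ + 1) := by nlinarith [norm_nonneg d]
        _ < t₀ * (‖d‖ + 1) := by nlinarith [norm_nonneg d]
        _ = ε := by rw [ht₀def]; field_simp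
    have h1t : (0:ℝ) < 1 + t := by linarith
    have hcomb : (t/(1+t)) • z + (1/(1+t)) • (x - t • d) = x := by
      rw [hddef]; match_scalars <;> (field_simp; try ring)
    have hcvx := hΓconv.2 hz hmem (by positivity : (0:ℝ) ≤ t/(1+t))
      (by positivity : (0:ℝ) ≤ 1/(1+t)) (by field_simp; ring)
    rw [hcomb] at hcvx
    simp only [smul_eq_mul] at hcvx
    have hΓv : Γ (x - t • d) ≤ v (x - t • d) := hΓle _ hmem
    rw [div_le_iff₀ ht0]
    have h3 : t / (1 + t) * Γ z + 1 / (1 + t) * Γ (x - t•d) = (t * Γ z + Γ (x - t•d)) / (1+t) := by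
      field_simp
    rw [h3] at hcvx
    have h4 : Γ x * (1 + t) ≤ t * Γ z + Γ (x - t • d) := (le_div_iff₀ h1t).1 hcvx
    rw [hxc] at h4
    nlinarith
  -- limit as t → 0⁺
  have hc : HasDerivAt (fun t : ℝ => x - t • d) (-d) 0 := by
    have : HasDerivAt (fun t : ℝ => t • d) d 0 := by
      simpa using (hasDerivAt_id (0:ℝ)).smul_const d
    simpa using this.const_sub x
  have hh : HasDerivAt (fun t : ℝ => v (x - t • d)) (φ (-d)) 0 := by
    have hφ' : HasFDerivAt v φ ((fun t : ℝ => x - t • d) 0) := by simpa using hφ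
    exact hφ'.comp_hasDerivAt 0 hc
  have hslope : Tendsto (fun t : ℝ => (v (x - t • d) - v x)/t) (𝓝[>] 0) (𝓝 (φ (-d))) := by
    have := hasDerivAt_iff_tendsto_slope.1 hh
    have h2 := this.mono_left (nhdsWithin_mono 0 (fun y hy => ne_of_gt hy : Ioi (0:ℝ) ⊆ {0}ᶜ))
    refine Filter.Tendsto.congr' ?_ h2
    filter_upwards [self_mem_nhdsWithin] with t ht
    simp [slope_def_field]
  have hslope' : Tendsto (fun t : ℝ => (v x - v (x - t • d))/t) (𝓝[>] 0) (𝓝 (φ d)) := by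
    have h4 := hslope.neg
    have h5 : -φ (-d) = φ d := by rw [φ.map_neg, neg_neg]
    rw [h5] at h4
    refine Filter.Tendsto.congr' ?_ h4
    filter_upwards with t
    rw [← neg_div, neg_sub]
  have hev : ∀ᶠ t in 𝓝[>] (0:ℝ), (v x - v (x - t • d))/t ≤ Γ z - Γ x := by
    filter_upwards [Ioo_mem_nhdsGT_of_mem (by exact ⟨le_refl _, ht₀⟩ : (0:ℝ) ∈ Ico 0 t₀)] with t ht
    exact key t ht
  have := le_of_tendsto hslope' hev
  linarith

/-- A subgradient of `Γ` at a contact point equals the derivative of `v`. -/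
lemma subgradient_eq_grad {Ω : Set X} (hΩo : IsOpen Ω) {Γ v : X → ℝ}
    (hΓle : ∀ x ∈ Ω, Γ x ≤ v x) {x : X} (hx : x ∈ Ω) (hxc : Γ x = v x)
    {φ : X →L[ℝ] ℝ} (hφ : HasFDerivAt v φ x) {p : X}
    (hp : ∀ z ∈ Ω, Γ x + ⟪p, z - x⟫ ≤ Γ z) :
    ∀ ξ : X, φ ξ = ⟪p, ξ⟫ := by
  have hmin : IsLocalMin (fun z => v z - (Γ x + ⟪p, z - x⟫)) x := by
    filter_upwards [hΩo.mem_nhds hx] with z hz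
    have h1 := hp z hz
    have h2 := hΓle z hz
    simp only [hxc]
    simp only [sub_self, inner_zero_right] at *
    linarith [h1, h2]
  have hd : HasFDerivAt (fun z => v z - (Γ x + ⟪p, z - x⟫))
      (φ - (innerSL ℝ p)) x := by
    have hlin : HasFDerivAt (fun z : X => Γ x + ⟪p, z - x⟫) (innerSL ℝ p) x := by
      have h1 : HasFDerivAt (fun z : X => (Γ x - ⟪p, x⟫) + ⟪p, z⟫) (innerSL ℝ p) x :=
        ((innerSL ℝ p).hasFDerivAt).const_add _
      have heq : (fun z : X => Γ x + ⟪p, z - x⟫) = fun z : X => (Γ x - ⟪p, x⟫) + ⟪p, z⟫ := by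
        funext z; rw [inner_sub_right]; ring
      rw [heq]; exact h1
    exact hφ.sub hlin
  have h0 : φ - innerSL ℝ p = 0 := by
    rw [← hd.fderiv]
    exact hmin.fderiv_eq_zero
  intro ξ
  have := congrArg (fun ψ : X →L[ℝ] ℝ => ψ ξ) h0
  simpa [sub_eq_zero] using this

/-- The convex conjugate of `Γ` relative to `Ω`. -/
noncomputable def envConj (Ω : Set (EuclideanSpace ℝ (Fin n)))
    (Γ : EuclideanSpace ℝ (Fin n) → ℝ) (q : EuclideanSpace ℝ (Fin n)) : ℝ :=
  sSup ((fun z => ⟪q, z⟫ - Γ z) '' Ω)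

lemma envConj_bdd {Ω : Set X} (hΩb : IsBounded Ω) {Γ : X → ℝ} {c : ℝ}
    (hc : ∀ z ∈ Ω, c ≤ Γ z) (q : X) :
    BddAbove ((fun z => ⟪q, z⟫ - Γ z) '' Ω) := by
  obtain ⟨R, hR⟩ := (isBounded_iff_subset_closedBall 0).1 hΩb
  refine ⟨‖q‖ * max R 0 - c, ?_⟩
  rintro y ⟨z, hz, rfl⟩
  have h1 : ⟪q, z⟫ ≤ ‖q‖ * max R 0 := by
    calc ⟪q, z⟫ ≤ ‖q‖ * ‖z‖ := real_inner_le_norm q z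
      _ ≤ ‖q‖ * max R 0 := by
        apply mul_le_mul_of_nonneg_left _ (norm_nonneg q)
        have := hR hz
        rw [mem_closedBall, dist_zero_right] at this
        exact this.trans (le_max_left _ _)
  have := hc z hz
  simp only
  linarith

lemma le_envConj {Ω : Set X} (hΩb : IsBounded Ω) {Γ : X → ℝ} {c : ℝ}
    (hc : ∀ z ∈ Ω, c ≤ Γ z) (q : X) {z : X} (hz : z ∈ Ω) :
    ⟪q, z⟫ - Γ z ≤ envConj Ω Γ q :=
  le_csSup (envConj_bdd hΩb hc q) (mem_image_of_mem _ hz)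

lemma envConj_le {Ω : Set X} (hΩne : Ω.Nonempty) {Γ : X → ℝ} {q : X} {b : ℝ}
    (h : ∀ z ∈ Ω, ⟪q, z⟫ - Γ z ≤ b) : envConj Ω Γ q ≤ b :=
  csSup_le (hΩne.image _) (by rintro y ⟨z, hz, rfl⟩; exact h z hz)

lemma envConj_lipschitz {Ω : Set X} (hΩb : IsBounded Ω) (hΩne : Ω.Nonempty)
    {Γ : X → ℝ} {c : ℝ} (hc : ∀ z ∈ Ω, c ≤ Γ z) :
    ∃ K : NNReal, LipschitzWith K (envConj Ω Γ) := by
  obtain ⟨R, hR⟩ := (isBounded_iff_subset_closedBall 0).1 hΩb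
  set R' := max R 0 with hR'def
  have hR'0 : 0 ≤ R' := le_max_right _ _
  refine ⟨⟨R', hR'0⟩, LipschitzWith.of_dist_le_mul fun q₁ q₂ => ?_⟩
  have hnorm : ∀ z ∈ Ω, ‖z‖ ≤ R' := fun z hz => by
    have := hR hz; rw [mem_closedBall, dist_zero_right] at this
    exact this.trans (le_max_left _ _)
  have key : ∀ q₁ q₂ : X, envConj Ω Γ q₁ ≤ envConj Ω Γ q₂ + R' * ‖q₁ - q₂‖ := by
    intro q₁ q₂
    refine envConj_le hΩne fun z hz => ?_
    have h1 : ⟪q₁, z⟫ - Γ z = (⟪q₂, z⟫ - Γ z) + ⟪q₁ - q₂, z⟫ := by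
      rw [inner_sub_left]; ring
    have h2 : ⟪q₁ - q₂, z⟫ ≤ ‖q₁ - q₂‖ * R' := by
      calc ⟪q₁ - q₂, z⟫ ≤ ‖q₁ - q₂‖ * ‖z‖ := real_inner_le_norm _ _
        _ ≤ ‖q₁ - q₂‖ * R' := mul_le_mul_of_nonneg_left (hnorm z hz) (norm_nonneg _)
    have h3 := le_envConj hΩb hc q₂ hz
    rw [h1]
    linarith
  rw [Real.dist_eq, dist_eq_norm]
  rw [abs_sub_le_iff]
  constructor
  · have := key q₁ q₂; change _ ≤ R' * _; linarith
  · have := key q₂ q₁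
    rw [show ‖q₂ - q₁‖ = ‖q₁ - q₂‖ from norm_sub_rev _ _] at this
    change _ ≤ R' * _; linarith

lemma envConj_touch {Ω : Set X} (hΩb : IsBounded Ω) {Γ : X → ℝ} {c : ℝ}
    (hc : ∀ z ∈ Ω, c ≤ Γ z) {x p : X} (hx : x ∈ Ω)
    (hp : ∀ z ∈ Ω, Γ x + ⟪p, z - x⟫ ≤ Γ z) :
    envConj Ω Γ p = ⟪p, x⟫ - Γ x := by
  refine le_antisymm (envConj_le ⟨x, hx⟩ fun z hz => ?_) (le_envConj hΩb hc p hx)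
  have := hp z hz
  rw [inner_sub_right] at this
  linarith

/-- If the conjugate is differentiable at `p`, the touching point of any affine minorant
that is exact at `p` is unique. -/
lemma envConj_point_unique {Ω : Set X} {Γ : X → ℝ} {p y₁ y₂ : X} {c₁ c₂ : ℝ}
    (hd : DifferentiableAt ℝ (envConj Ω Γ) p)
    (h₁ : ∀ q, ⟪q, y₁⟫ - c₁ ≤ envConj Ω Γ q) (e₁ : ⟪p, y₁⟫ - c₁ = envConj Ω Γ p)
    (h₂ : ∀ q, ⟪q, y₂⟫ - c₂ ≤ envConj Ω Γ q) (e₂ : ⟪p, y₂⟫ - c₂ = envConj Ω Γ p) :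
    y₁ = y₂ := by
  have main : ∀ (y : X) (c : ℝ), (∀ q, ⟪q, y⟫ - c ≤ envConj Ω Γ q) →
      (⟪p, y⟫ - c = envConj Ω Γ p) → fderiv ℝ (envConj Ω Γ) p = innerSL ℝ y := by
    intro y c hmin htouch
    have hGmin : IsLocalMin (fun q => envConj Ω Γ q - (⟪q, y⟫ - c)) p := by
      filter_upwards with q
      have h1 := hmin q
      simp only [← htouch]
      linarith
    have hlin : HasFDerivAt (fun q : X => ⟪q, y⟫ - c) (innerSL ℝ y) p := by
      have h1 : HasFDerivAt (fun q : X => ⟪y, q⟫ - c) (innerSL ℝ y) p :=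
        ((innerSL ℝ y).hasFDerivAt).sub_const _
      have heq : (fun q : X => ⟪q, y⟫ - c) = fun q : X => ⟪y, q⟫ - c := by
        funext q; rw [real_inner_comm]
      rw [heq]; exact h1
    have hGd : HasFDerivAt (fun q => envConj Ω Γ q - (⟪q, y⟫ - c))
        (fderiv ℝ (envConj Ω Γ) p - innerSL ℝ y) p := hd.hasFDerivAt.sub hlin
    have h0 := hGmin.fderiv_eq_zero
    rw [hGd.fderiv] at h0
    rwa [sub_eq_zero] at h0
  have e1 := main y₁ c₁ h₁ e₁
  have e2 := main y₂ c₂ h₂ e₂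
  have h3 : innerSL ℝ y₁ = innerSL ℝ y₂ := by rw [← e1, e2]
  have h4 := congrArg (fun ψ : X →L[ℝ] ℝ => ψ (y₁ - y₂)) h3
  simp only [innerSL_apply_apply] at h4
  have : ⟪y₁ - y₂, y₁ - y₂⟫ = 0 := by
    rw [inner_sub_left]; rw [h4]; ring
  rwa [inner_self_eq_zero, sub_eq_zero] at this

/-- At a contact point the second derivative of `v` is positive semidefinite. -/
lemma contact_sndDeriv_nonneg {Ω : Set X} (hΩo : IsOpen Ω) {Γ v : X → ℝ}
    (hΓconv : ConvexOn ℝ Ω Γ) (hΓle : ∀ z ∈ Ω, Γ z ≤ v z)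
    (hv : ContDiffOn ℝ 2 v Ω) {x : X} (hx : x ∈ Ω) (hxc : Γ x = v x) (ξ : X) :
    0 ≤ fderiv ℝ (fderiv ℝ v) x ξ ξ := by
  by_contra hneg
  push_neg at hneg
  obtain ⟨ε, hε, hball⟩ := Metric.isOpen_iff.1 hΩo x hx
  set t₁ : ℝ := ε / (‖ξ‖ + 1) with ht₁def
  have ht₁ : 0 < t₁ := by positivity
  have hmem : ∀ t : ℝ, |t| < t₁ → x + t • ξ ∈ Ω ∧ x - t • ξ ∈ Ω := by
    intro t ht
    constructor <;> (apply hball; rw [mem_ball, dist_eq_norm])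
    · have : x + t • ξ - x = t • ξ := by module
      rw [this, norm_smul, Real.norm_eq_abs]
      calc |t| * ‖ξ‖ ≤ |t| * (‖ξ‖ + 1) := by nlinarith [abs_nonneg t, norm_nonneg ξ]
        _ < t₁ * (‖ξ‖ + 1) := by nlinarith [norm_nonneg ξ]
        _ = ε := by rw [ht₁def]; field_simp
    · have : x - t • ξ - x = (-t) • ξ := by module
      rw [this, norm_smul, Real.norm_eq_abs, abs_neg]
      calc |t| * ‖ξ‖ ≤ |t| * (‖ξ‖ + 1) := by nlinarith [abs_nonneg t, norm_nonneg ξ]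
        _ < t₁ * (‖ξ‖ + 1) := by nlinarith [norm_nonneg ξ]
        _ = ε := by rw [ht₁def]; field_simp
  set ψ : ℝ → ℝ := fun t => v (x + t • ξ) + v (x - t • ξ) - 2 * v x with hψdef
  -- ψ ≥ 0 on |t| < t₁
  have hψpos : ∀ t : ℝ, |t| < t₁ → 0 ≤ ψ t := by
    intro t ht
    obtain ⟨h₁, h₂⟩ := hmem t ht
    have hcomb : (1/2 : ℝ) • (x + t • ξ) + (1/2 : ℝ) • (x - t • ξ) = x := by module
    have := hΓconv.2 h₁ h₂ (by norm_num : (0:ℝ) ≤ 1/2) (by norm_num : (0:ℝ) ≤ 1/2) (by norm_num)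
    rw [hcomb] at this
    simp only [smul_eq_mul] at this
    have g₁ := hΓle _ h₁
    have g₂ := hΓle _ h₂
    simp only [hψdef]
    rw [hxc] at this
    linarith
  -- differentiability of v near x
  have hvdiff : ∀ y ∈ Ω, HasFDerivAt v (fderiv ℝ v y) y := by
    intro y hy
    have : DifferentiableAt ℝ v y :=
      (hv.differentiableOn (by norm_num)).differentiableAt (hΩo.mem_nhds hy)
    exact this.hasFDerivAt
  -- F := fderiv v is differentiable at x
  have hF : ContDiffOn ℝ 1 (fderiv ℝ v) Ω := hv.fderiv_of_isOpen hΩo (by norm_num)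
  have hFd : HasFDerivAt (fderiv ℝ v) (fderiv ℝ (fderiv ℝ v) x) x := by
    have : DifferentiableAt ℝ (fderiv ℝ v) x :=
      (hF.differentiableOn (by norm_num)).differentiableAt (hΩo.mem_nhds hx)
    exact this.hasFDerivAt
  set H : X →L[ℝ] X →L[ℝ] ℝ := fderiv ℝ (fderiv ℝ v) x with hHdef
  -- derivative of ψ
  have hc₁ : ∀ t : ℝ, HasDerivAt (fun s : ℝ => x + s • ξ) ξ t := by
    intro t
    simpa using ((hasDerivAt_id t).smul_const ξ).const_add x
  have hc₂ : ∀ t : ℝ, HasDerivAt (fun s : ℝ => x - s • ξ) (-ξ) t := by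
    intro t
    simpa using ((hasDerivAt_id t).smul_const ξ).const_sub x
  set D : ℝ → ℝ := fun t => fderiv ℝ v (x + t • ξ) ξ - fderiv ℝ v (x - t • ξ) ξ with hDdef
  have hψd : ∀ t : ℝ, |t| < t₁ → HasDerivAt ψ (D t) t := by
    intro t ht
    obtain ⟨h₁, h₂⟩ := hmem t ht
    have e₁ : HasDerivAt (fun s : ℝ => v (x + s • ξ)) (fderiv ℝ v (x + t • ξ) ξ) t := by
      have := (hvdiff _ h₁).comp_hasDerivAt t (hc₁ t)
      simpa [Function.comp_def] using this
    have e₂ : HasDerivAt (fun s : ℝ => v (x - s • ξ)) (-(fderiv ℝ v (x - t • ξ) ξ)) t := by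
      have := (hvdiff _ h₂).comp_hasDerivAt t (hc₂ t)
      simpa [Function.comp_def] using this
    have := (e₁.add e₂).sub_const (2 * v x)
    simpa [hψdef, hDdef, sub_eq_add_neg] using this
  -- derivative of D at 0 is 2 H ξ ξ
  have hDd : HasDerivAt D (2 * (H ξ ξ)) 0 := by
    have hA : HasDerivAt (fun t : ℝ => fderiv ℝ v (x + t • ξ)) (H ξ) 0 := by
      have h0 : HasFDerivAt (fderiv ℝ v) H ((fun s : ℝ => x + s • ξ) 0) := by
        simpa using hFd
      have := h0.comp_hasDerivAt 0 (hc₁ 0)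
      simpa [Function.comp_def] using this
    have hB : HasDerivAt (fun t : ℝ => fderiv ℝ v (x - t • ξ)) (-(H ξ)) 0 := by
      have h0 : HasFDerivAt (fderiv ℝ v) H ((fun s : ℝ => x - s • ξ) 0) := by
        simpa using hFd
      have := h0.comp_hasDerivAt 0 (hc₂ 0)
      simpa [Function.comp_def] using this
    have hA' : HasDerivAt (fun t : ℝ => fderiv ℝ v (x + t • ξ) ξ) (H ξ ξ) 0 := by
      have := (ContinuousLinearMap.apply ℝ ℝ ξ).hasFDerivAt.comp_hasDerivAt 0 hA
      simpa [Function.comp_def] using this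
    have hB' : HasDerivAt (fun t : ℝ => fderiv ℝ v (x - t • ξ) ξ) (-(H ξ ξ)) 0 := by
      have := (ContinuousLinearMap.apply ℝ ℝ ξ).hasFDerivAt.comp_hasDerivAt 0 hB
      simpa [Function.comp_def] using this
    have := hA'.sub hB'
    have h2 : H ξ ξ - -(H ξ ξ) = 2 * (H ξ ξ) := by ring
    rw [h2] at this
    exact this
  -- D 0 = 0
  have hD0 : D 0 = 0 := by simp [hDdef]
  -- slope of D at 0 tends to 2 H ξ ξ < 0, so D < 0 on (0, δ)
  have hslope : Tendsto (fun t : ℝ => D t / t) (𝓝[>] 0) (𝓝 (2 * (H ξ ξ))) := by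
    have := hasDerivAt_iff_tendsto_slope.1 hDd
    have h2 := this.mono_left (nhdsWithin_mono 0 (fun y hy => ne_of_gt hy : Ioi (0:ℝ) ⊆ {0}ᶜ))
    refine Filter.Tendsto.congr' ?_ h2
    filter_upwards [self_mem_nhdsWithin] with t _
    simp [slope_def_field, hD0]
  have hDneg : ∀ᶠ t in 𝓝[>] (0:ℝ), D t < 0 := by
    have hev : ∀ᶠ t in 𝓝[>] (0:ℝ), D t / t < 0 := by
      have : (2 : ℝ) * (H ξ ξ) < 0 := by linarith
      exact hslope.eventually (eventually_lt_nhds this)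
    filter_upwards [hev, self_mem_nhdsWithin] with t ht ht'
    have := ht
    rcases lt_or_ge (D t) 0 with h | h
    · exact h
    · exfalso
      have : 0 ≤ D t / t := div_nonneg h (le_of_lt ht')
      linarith
  have hset : {t : ℝ | D t < 0 ∧ t ∈ Ioo (0:ℝ) t₁} ∈ 𝓝[>] (0:ℝ) := by
    have h1 := hDneg
    have h2 : Ioo (0:ℝ) t₁ ∈ 𝓝[>] (0:ℝ) :=
      Ioo_mem_nhdsGT_of_mem (⟨le_refl _, ht₁⟩ : (0:ℝ) ∈ Ico 0 t₁)
    filter_upwards [h1, h2] with t ht1 ht2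
    exact ⟨ht1, ht2⟩
  obtain ⟨δ, hδ0, hδsub⟩ := mem_nhdsGT_iff_exists_Ioc_subset.1 hset
  have hδmem := hδsub (right_mem_Ioc.2 hδ0)
  have hδt₁ : δ < t₁ := hδmem.2.2
  have habs : ∀ t ∈ Icc (0:ℝ) δ, |t| < t₁ := by
    intro t ht
    rw [abs_of_nonneg ht.1]
    exact lt_of_le_of_lt ht.2 hδt₁
  have hanti : StrictAntiOn ψ (Icc 0 δ) := by
    apply strictAntiOn_of_deriv_neg (convex_Icc 0 δ)
    · intro t ht
      exact (hψd t (habs t ht)).continuousAt.continuousWithinAt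
    · intro t ht
      rw [interior_Icc] at ht
      have htΩ : t ∈ Ioc (0:ℝ) δ := ⟨ht.1, ht.2.le⟩
      have h2 := hδsub htΩ
      rw [(hψd t (habs t (Ioo_subset_Icc_self ht))).deriv]
      exact h2.1
  have h1 : ψ δ < ψ 0 := hanti (left_mem_Icc.2 hδ0.le) (right_mem_Icc.2 hδ0.le) hδ0
  have h2 : ψ 0 = 0 := by simp [hψdef]; ring
  have h3 := hψpos δ (by rw [abs_of_pos hδ0]; exact hδt₁)
  linarith

lemma matrix_posSemidef_of_bilinear {A : Matrix (Fin n) (Fin n) ℝ}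
    {B : X →L[ℝ] X →L[ℝ] ℝ}
    (hA : ∀ i j, A i j = B (EuclideanSpace.single i 1) (EuclideanSpace.single j 1))
    (hsymm : ∀ a b : X, B a b = B b a)
    (hquad : ∀ ξ : X, 0 ≤ B ξ ξ) : A.PosSemidef := by
  have hrepr : ∀ (ξ : X) (φ : X →L[ℝ] ℝ),
      φ ξ = ∑ i, ξ i * φ (EuclideanSpace.single i 1) := by
    intro ξ φ
    have hbasis := (EuclideanSpace.basisFun (Fin n) ℝ).toBasis.sum_repr ξ
    conv_lhs => rw [← hbasis]
    rw [map_sum]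
    refine Finset.sum_congr rfl fun i _ => ?_
    rw [_root_.map_smul]
    simp [EuclideanSpace.basisFun_apply, OrthonormalBasis.coe_toBasis,
      OrthonormalBasis.coe_toBasis_repr_apply, EuclideanSpace.basisFun_repr,
      smul_eq_mul]
  rw [Matrix.posSemidef_iff_dotProduct_mulVec]
  constructor
  · rw [Matrix.IsHermitian]
    ext i j
    simp only [Matrix.conjTranspose_apply, star_trivial]
    rw [hA i j, hA j i, hsymm]
  · intro ζ
    set ξ : X := (EuclideanSpace.equiv (Fin n) ℝ).symm ζ with hξdef
    have hζ : ∀ i, ζ i = ξ i := fun i => rfl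
    have expand : dotProduct (star ζ) (A.mulVec ζ) = B ξ ξ := by
      have h1 : B ξ ξ = ∑ i, ξ i * B (EuclideanSpace.single i 1) ξ := by
        have := hrepr ξ (ContinuousLinearMap.flip B ξ)
        simpa [ContinuousLinearMap.flip_apply] using this
      have h2 : ∀ i, B (EuclideanSpace.single i 1) ξ
          = ∑ j, ξ j * B (EuclideanSpace.single i 1) (EuclideanSpace.single j 1) := fun i =>
        hrepr ξ (B (EuclideanSpace.single i 1))
      rw [h1]
      simp only [h2]
      rw [dotProduct]
      congr 1
      funext i
      simp only [star_trivial, Matrix.mulVec, dotProduct]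
      rw [Finset.mul_sum, Finset.mul_sum]
      congr 1
      funext j
      rw [hA i j, hζ i, hζ j]
      ring
    rw [expand]
    exact hquad ξ

lemma posSemidef_det_nonneg {A : Matrix (Fin n) (Fin n) ℝ} (hA : A.PosSemidef) :
    0 ≤ A.det := by
  rw [hA.1.det_eq_prod_eigenvalues]
  apply Finset.prod_nonneg
  intro i _
  exact_mod_cast hA.eigenvalues_nonneg i

lemma lintegral_det_eq_zero_of_image_null {Z : Set X} (hZ : MeasurableSet Z)
    {g : X → X} {g' : X → X →L[ℝ] X}
    (hg : ∀ x ∈ Z, HasFDerivAt g (g' x) x)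
    (hgc : ∀ x ∈ Z, ContDiffAt ℝ 1 g x)
    (hdet : Measurable fun x => (g' x).det)
    (hnull : volume (g '' Z) = 0) :
    ∫⁻ x in Z, ENNReal.ofReal |(g' x).det| = 0 := by
  set Z₀ : Set X := Z ∩ {x | (g' x).det = 0} with hZ₀def
  set Z₁ : Set X := Z ∩ {x | (g' x).det ≠ 0} with hZ₁def
  have hZ₀m : MeasurableSet Z₀ := hZ.inter (hdet (measurableSet_singleton 0))
  have hZ₁m : MeasurableSet Z₁ := hZ.inter (hdet (measurableSet_singleton 0)).compl
  have hsplit : Z = Z₀ ∪ Z₁ := by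
    ext x; by_cases h : (g' x).det = 0 <;> simp [hZ₀def, hZ₁def, h]
  have hint₀ : ∫⁻ x in Z₀, ENNReal.ofReal |(g' x).det| = 0 := by
    have hae : ∀ᵐ x ∂volume, x ∈ Z₀ → ENNReal.ofReal |(g' x).det| = (fun _ => (0:ℝ≥0∞)) x :=
      ae_of_all _ fun x hx => by
        have h0 : (g' x).det = 0 := hx.2
        simp [h0]
    rw [setLIntegral_congr_fun_ae hZ₀m hae, lintegral_zero]
  -- local injectivity neighborhoods
  have hloc : ∀ x ∈ Z₁, ∃ U : Set X, IsOpen U ∧ x ∈ U ∧ InjOn g U := by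
    intro x hx
    have hdetx : (g' x).det ≠ 0 := hx.2
    have hlmdet : LinearMap.det ((g' x) : X →ₗ[ℝ] X) ≠ 0 := hdetx
    set e₀ : X ≃ₗ[ℝ] X := LinearMap.equivOfDetNeZero _ hlmdet with he₀def
    set e : X ≃L[ℝ] X := LinearEquiv.toContinuousLinearEquiv e₀ with hedef
    have hcoe : (e : X →L[ℝ] X) = g' x := by
      apply ContinuousLinearMap.coe_injective
      rfl
    have hstrict : HasStrictFDerivAt g (g' x) x := by
      have h1 := (hgc x hx.1).hasStrictFDerivAt one_ne_zero
      rwa [(hg x hx.1).fderiv] at h1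
    rw [← hcoe] at hstrict
    refine ⟨(hstrict.toOpenPartialHomeomorph g).source, (hstrict.toOpenPartialHomeomorph g).open_source,
      hstrict.mem_toOpenPartialHomeomorph_source, ?_⟩
    have := (hstrict.toOpenPartialHomeomorph g).injOn
    rwa [hstrict.toOpenPartialHomeomorph_coe] at this
  classical
  set U : X → Set X := fun x =>
    if h : ∃ U : Set X, IsOpen U ∧ x ∈ U ∧ InjOn g U then h.choose else univ with hUdef
  have hU : ∀ x ∈ Z₁, IsOpen (U x) ∧ x ∈ U x ∧ InjOn g (U x) := by
    intro x hx
    have h := hloc x hx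
    simp only [hUdef, dif_pos h]
    exact h.choose_spec
  obtain ⟨t, htsub, htc, htcover⟩ := TopologicalSpace.countable_cover_nhdsWithin
    (f := U) (s := Z₁) (fun x hx => nhdsWithin_le_nhds ((hU x hx).1.mem_nhds (hU x hx).2.1))
  have : Countable ↥t := htc.to_subtype
  have hZ₁cover : Z₁ = ⋃ x : t, (Z₁ ∩ U x) := by
    apply Subset.antisymm
    · intro y hy
      obtain ⟨x, hxt, hyU⟩ := by simpa using htcover hy
      exact mem_iUnion.2 ⟨⟨x, hxt⟩, hy, hyU⟩
    · exact iUnion_subset fun x => inter_subset_left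
  have hint₁ : ∫⁻ x in Z₁, ENNReal.ofReal |(g' x).det| = 0 := by
    refine le_antisymm ?_ zero_le
    calc ∫⁻ x in Z₁, ENNReal.ofReal |(g' x).det|
        = ∫⁻ x in ⋃ x : t, (Z₁ ∩ U x), ENNReal.ofReal |(g' x).det| := by rw [← hZ₁cover]
      _ ≤ ∑' x : t, ∫⁻ y in Z₁ ∩ U x, ENNReal.ofReal |(g' y).det| :=
          lintegral_iUnion_le _ _
      _ ≤ ∑' x : t, 0 := by
          apply ENNReal.tsum_le_tsum
          rintro ⟨x, hxt⟩
          have hxZ₁ := htsub hxt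
          obtain ⟨hUo, hUx, hUinj⟩ := hU x hxZ₁
          have hSm : MeasurableSet (Z₁ ∩ U x) := hZ₁m.inter hUo.measurableSet
          have hf' : ∀ y ∈ Z₁ ∩ U x, HasFDerivWithinAt g (g' y) (Z₁ ∩ U x) y :=
            fun y hy => (hg y hy.1.1).hasFDerivWithinAt
          have hinj : InjOn g (Z₁ ∩ U x) := hUinj.mono inter_subset_right
          have heq := lintegral_abs_det_fderiv_eq_addHaar_image volume hSm hf' hinj
          rw [heq]
          refine le_trans (measure_mono ?_) (le_of_eq hnull)
          exact image_mono (inter_subset_left.trans inter_subset_left)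
      _ = 0 := by simp
  rw [hsplit]
  refine le_antisymm ?_ zero_le
  calc ∫⁻ x in Z₀ ∪ Z₁, ENNReal.ofReal |(g' x).det|
      ≤ (∫⁻ x in Z₀, ENNReal.ofReal |(g' x).det|)
        + ∫⁻ x in Z₁, ENNReal.ofReal |(g' x).det| := lintegral_union_le _ _ _
    _ = 0 := by rw [hint₀, hint₁, add_zero]

lemma clm_det_eq_matrix_det {A : Matrix (Fin n) (Fin n) ℝ} {T : X →L[ℝ] X}
    (h : ∀ i j, (T (EuclideanSpace.single j 1)) i = A j i) :
    T.det = A.det := by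
  have hM : LinearMap.toMatrix (EuclideanSpace.basisFun (Fin n) ℝ).toBasis
      (EuclideanSpace.basisFun (Fin n) ℝ).toBasis (T : X →ₗ[ℝ] X) = A.transpose := by
    ext i j
    rw [LinearMap.toMatrix_apply]
    simp only [OrthonormalBasis.coe_toBasis_repr_apply, EuclideanSpace.basisFun_repr,
      OrthonormalBasis.coe_toBasis, EuclideanSpace.basisFun_apply,
      ContinuousLinearMap.coe_coe, Matrix.transpose_apply]
    exact h i j
  have h2 : T.det = LinearMap.det (T : X →ₗ[ℝ] X) := rfl
  rw [h2, ← LinearMap.det_toMatrix (EuclideanSpace.basisFun (Fin n) ℝ).toBasis, hM,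
    Matrix.det_transpose]

lemma euclidean_toDual_symm_apply (ℓ : X →L[ℝ] ℝ) (i : Fin n) :
    ((InnerProductSpace.toDual ℝ (EuclideanSpace ℝ (Fin n))).symm ℓ) i
      = ℓ (EuclideanSpace.single i 1) := by
  have h1 : ⟪(InnerProductSpace.toDual ℝ (EuclideanSpace ℝ (Fin n))).symm ℓ,
      EuclideanSpace.single i 1⟫ = ℓ (EuclideanSpace.single i 1) :=
    InnerProductSpace.toDual_symm_apply
  rw [← h1, EuclideanSpace.inner_single_right]
  simp
/-- affine functions are convex on any set -/
lemma affine_convexOn {Ω : Set X} (hΩc : Convex ℝ Ω) (p : X) (a : ℝ) :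
    ConvexOn ℝ Ω (fun z => ⟪p, z⟫ + a) := by
  refine ⟨hΩc, fun z hz y hy s t hs ht hst => ?_⟩
  simp only [inner_add_right, inner_smul_right, smul_eq_mul]
  apply le_of_eq
  linear_combination (-a) * hst

/-- KEY: if the conjugate is differentiable at a subgradient `p` of the convex envelope `Γ`
attained at `x ∈ Ω`, then `x` is a contact point. -/
lemma contact_of_differentiableAt {Ω : Set X} (hΩo : IsOpen Ω) (hΩc : Convex ℝ Ω)
    (hΩb : IsBounded Ω) {Γ v : X → ℝ} (hΓconv : ConvexOn ℝ Ω Γ)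
    (hΓle : ∀ z ∈ Ω, Γ z ≤ v z)
    (hΓmax : ∀ φ : X → ℝ, ConvexOn ℝ Ω φ → (∀ z ∈ Ω, φ z ≤ v z) → ∀ z ∈ Ω, φ z ≤ Γ z)
    (hvcont : ContinuousOn v Ω) {c : ℝ} (hc : ∀ z ∈ Ω, c ≤ Γ z)
    {x p : X} (hx : x ∈ Ω) (hp : ∀ z ∈ Ω, Γ x + ⟪p, z - x⟫ ≤ Γ z)
    (hd : DifferentiableAt ℝ (envConj Ω Γ) p) :
    Γ x = v x := by
  set ℓ : X → ℝ := fun z => Γ x + ⟪p, z - x⟫ with hℓdef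
  have hℓcont : Continuous ℓ := by
    apply Continuous.add continuous_const
    exact (continuous_const.inner (continuous_id.sub continuous_const))
  by_contra hne
  have hlt : Γ x < v x := lt_of_le_of_ne (hΓle x hx) hne
  -- a sequence of near-touching points for v
  have hseq : ∀ k : ℕ, ∃ z ∈ Ω, v z < ℓ z + 1/(k+1) := by
    intro k
    by_contra hcon
    push_neg at hcon
    set φ : X → ℝ := fun z => max (Γ z) (ℓ z + 1/(k+1)) with hφdef
    have hφconv : ConvexOn ℝ Ω φ := by
      refine hΓconv.sup ?_
      have heq : (fun z => ℓ z + 1/(k+1)) = fun z => ⟪p, z⟫ + (Γ x - ⟪p, x⟫ + 1/(k+1)) := by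
        funext z; simp only [hℓdef, inner_sub_right]; ring
      rw [heq]
      exact affine_convexOn hΩc p _
    have hφle : ∀ z ∈ Ω, φ z ≤ v z := fun z hz =>
      max_le (hΓle z hz) (hcon z hz)
    have := hΓmax φ hφconv hφle x hx
    have hφx : Γ x + 1/(k+1) ≤ φ x := by
      have : ℓ x = Γ x := by simp [hℓdef]
      calc Γ x + 1/(k+1) = ℓ x + 1/(k+1) := by rw [this]
        _ ≤ φ x := le_max_right _ _
    have hk : (0:ℝ) < 1/(k+1) := by positivity
    linarith
  choose z hzΩ hzlt using hseq
  obtain ⟨zs, _, ψ, hψmono, hψtend⟩ := tendsto_subseq_of_bounded hΩb hzΩ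
  have hzsub : ∀ k, ℓ (z k) ≤ Γ (z k) := fun k => hp (z k) (hzΩ k)
  have hzup : ∀ k, Γ (z k) < ℓ (z k) + 1/(k+1) := fun k =>
    lt_of_le_of_lt (hΓle _ (hzΩ k)) (hzlt k)
  have hδtend : Tendsto (fun k : ℕ => 1/((ψ k : ℝ)+1)) atTop (𝓝 0) := by
    apply Tendsto.comp tendsto_one_div_add_atTop_nhds_zero_nat ?_
    exact hψmono.tendsto_atTop
  have hℓtend : Tendsto (fun k => ℓ (z (ψ k))) atTop (𝓝 (ℓ zs)) :=
    (hℓcont.tendsto zs).comp hψtend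
  have hΓtend : Tendsto (fun k => Γ (z (ψ k))) atTop (𝓝 (ℓ zs)) := by
    refine tendsto_of_tendsto_of_tendsto_of_le_of_le hℓtend ?_
      (fun k => hzsub (ψ k)) (fun k => (hzup (ψ k)).le)
    have := hℓtend.add hδtend
    simpa using this
  -- affine minorant of envConj touching at p, with foot zs
  have hmin₂ : ∀ q, ⟪q, zs⟫ - ℓ zs ≤ envConj Ω Γ q := by
    intro q
    have hterm : ∀ k, ⟪q, z (ψ k)⟫ - Γ (z (ψ k)) ≤ envConj Ω Γ q := fun k =>
      le_envConj hΩb hc q (hzΩ (ψ k))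
    have hqtend : Tendsto (fun k => ⟪q, z (ψ k)⟫ - Γ (z (ψ k))) atTop
        (𝓝 (⟪q, zs⟫ - ℓ zs)) := by
      refine Tendsto.sub ?_ hΓtend
      exact ((continuous_const.inner continuous_id).tendsto zs).comp hψtend
    exact le_of_tendsto hqtend (Eventually.of_forall hterm)
  have htouch₂ : ⟪p, zs⟫ - ℓ zs = envConj Ω Γ p := by
    rw [envConj_touch hΩb hc hx hp, hℓdef]
    simp only [inner_sub_right]
    ring
  have hmin₁ : ∀ q, ⟪q, x⟫ - Γ x ≤ envConj Ω Γ q := fun q => le_envConj hΩb hc q hx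
  have htouch₁ : ⟪p, x⟫ - Γ x = envConj Ω Γ p := (envConj_touch hΩb hc hx hp).symm
  have hxzs : x = zs := envConj_point_unique hd hmin₁ htouch₁ hmin₂ htouch₂
  subst hxzs
  -- now v x ≤ ℓ x = Γ x, contradiction
  have hvtend : Tendsto (fun k => v (z (ψ k))) atTop (𝓝 (v x)) := by
    have : ContinuousAt v x := hvcont.continuousAt (hΩo.mem_nhds hx)
    exact this.tendsto.comp hψtend
  have hub : Tendsto (fun k => ℓ (z (ψ k)) + 1/((ψ k:ℝ)+1)) atTop (𝓝 (ℓ x)) := by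
    have := hℓtend.add hδtend
    simpa using this
  have hle : v x ≤ ℓ x :=
    le_of_tendsto_of_tendsto' hvtend hub fun k => (hzlt (ψ k)).le
  have : ℓ x = Γ x := by simp [hℓdef]
  rw [this] at hle
  linarith

/-- The Monge–Ampère measure of the convex envelope `Γ` of `v = u - w/2` on a bounded
convex open set `Ω` is concentrated on the contact set `{Γ = v}` and given there by
`det D²v`: for every Borel `E ⊆ Ω`, the Lebesgue measure of the subgradient image
`∇Γ(E)` equals `∫_{E ∩ {Γ = v}} det D²v`. -/
theorem convex_envelope_MA_measure {n : ℕ}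
    (Ω : Set (EuclideanSpace ℝ (Fin n)))
    (hΩo : IsOpen Ω) (hΩc : Convex ℝ Ω) (hΩb : Bornology.IsBounded Ω)
    (u w : EuclideanSpace ℝ (Fin n) → ℝ)
    (hu : ContDiffOn ℝ 2 u Ω) (hw : ContDiffOn ℝ 2 w Ω)
    (hwconv : ConvexOn ℝ Ω w)
    (Γ : EuclideanSpace ℝ (Fin n) → ℝ)
    (hΓconv : ConvexOn ℝ Ω Γ)
    (hΓle : ∀ x ∈ Ω, Γ x ≤ u x - w x / 2)
    (hΓmax : ∀ φ : EuclideanSpace ℝ (Fin n) → ℝ, ConvexOn ℝ Ω φ →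
      (∀ x ∈ Ω, φ x ≤ u x - w x / 2) → ∀ x ∈ Ω, φ x ≤ Γ x)
    (Hv : EuclideanSpace ℝ (Fin n) → Matrix (Fin n) (Fin n) ℝ)
    (hHv : ∀ x ∈ Ω, ∀ i j,
      Hv x i j = iteratedFDerivWithin ℝ 2 (fun z => u z - w z / 2) Ω x
        ![EuclideanSpace.single i 1, EuclideanSpace.single j 1])
    (E : Set (EuclideanSpace ℝ (Fin n))) (hE : MeasurableSet E) (hEΩ : E ⊆ Ω) :
    volume {p : EuclideanSpace ℝ (Fin n) |
        ∃ x ∈ E, ∀ z ∈ Ω, Γ x + ⟪p, z - x⟫ ≤ Γ z}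
      = ∫⁻ x in E ∩ {x ∈ Ω | Γ x = u x - w x / 2},
          ENNReal.ofReal (Hv x).det := by
  classical
  set v : EuclideanSpace ℝ (Fin n) → ℝ := fun z => u z - w z / 2 with hvdef
  have hv : ContDiffOn ℝ 2 v Ω := hu.sub (hw.div_const 2)
  show volume {p : EuclideanSpace ℝ (Fin n) |
        ∃ x ∈ E, ∀ z ∈ Ω, Γ x + ⟪p, z - x⟫ ≤ Γ z}
      = ∫⁻ x in E ∩ {x | x ∈ Ω ∧ Γ x = v x}, ENNReal.ofReal (Hv x).det
  rcases Set.eq_empty_or_nonempty Ω with hΩe | ⟨x₀, hx₀⟩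
  · have hEe : E = ∅ := subset_empty_iff.1 (hΩe ▸ hEΩ)
    subst hΩe
    simp [hEe]
  have hΩne : Ω.Nonempty := ⟨x₀, hx₀⟩
  have hΓcont : ContinuousOn Γ Ω := hΓconv.continuousOn hΩo
  have hvcont : ContinuousOn v Ω := hv.continuousOn
  obtain ⟨c, hc⟩ := convexOn_bddBelow hΩo hΩb hΓconv hx₀
  -- the gradient map of v and its derivative
  set F := fderiv ℝ v with hFdef
  have hvd : ∀ y ∈ Ω, HasFDerivAt v (F y) y := fun y hy =>
    ((hv.differentiableOn (by norm_num)).differentiableAt (hΩo.mem_nhds hy)).hasFDerivAt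
  have hF : ContDiffOn ℝ 1 F Ω := hv.fderiv_of_isOpen hΩo (by norm_num)
  set T := (InnerProductSpace.toDual ℝ (EuclideanSpace ℝ (Fin n))).symm with hTdef
  set TL := T.toContinuousLinearEquiv.toContinuousLinearMap with hTLdef
  set g : EuclideanSpace ℝ (Fin n) → EuclideanSpace ℝ (Fin n) := fun y => T (F y) with hgdef
  set g' : EuclideanSpace ℝ (Fin n) → (EuclideanSpace ℝ (Fin n)) →L[ℝ] (EuclideanSpace ℝ (Fin n)) :=
    fun y => TL.comp (fderiv ℝ F y) with hg'def
  have hgd : ∀ y ∈ Ω, HasFDerivAt g (g' y) y := by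
    intro y hy
    have hFd : HasFDerivAt F (fderiv ℝ F y) y :=
      ((hF.differentiableOn one_ne_zero).differentiableAt (hΩo.mem_nhds hy)).hasFDerivAt
    exact (TL.hasFDerivAt).comp y hFd
  have hgc : ∀ y ∈ Ω, ContDiffAt ℝ 1 g y := by
    intro y hy
    exact ContDiff.comp_contDiffAt _ TL.contDiff (hF.contDiffAt (hΩo.mem_nhds hy))
  -- the conjugate function and its a.e. differentiability
  obtain ⟨K, hK⟩ := envConj_lipschitz hΩb hΩne hc
  set N : Set (EuclideanSpace ℝ (Fin n)) :=
    {p | ¬ DifferentiableAt ℝ (envConj Ω Γ) p} with hNdef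
  have hNnull : volume N = 0 := ae_iff.1 (hK.ae_differentiableAt (μ := volume))
  have hNm : MeasurableSet N := (measurableSet_of_differentiableAt ℝ (envConj Ω Γ)).compl
  have hgm : Measurable g := T.continuous.measurable.comp (measurable_fderiv ℝ v)
  -- the contact set is measurable
  set C : Set (EuclideanSpace ℝ (Fin n)) := {x | x ∈ Ω ∧ Γ x = v x} with hCdef
  have hCm : MeasurableSet C := by
    have hiff : C = ⋂ k : ℕ, {x | x ∈ Ω ∧ |Γ x - v x| < 1/(k+1)} := by
      ext x
      simp only [hCdef, mem_iInter, mem_setOf_eq]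
      constructor
      · rintro ⟨hx, he⟩ k
        refine ⟨hx, ?_⟩
        rw [he, sub_self, abs_zero]
        positivity
      · intro h
        refine ⟨(h 0).1, ?_⟩
        have habs : |Γ x - v x| ≤ 0 := by
          by_contra hpos
          push_neg at hpos
          obtain ⟨k, hk⟩ := exists_nat_one_div_lt hpos
          have := (h k).2
          rw [show ((k:ℝ)+1) = ((k:ℝ)+1) from rfl] at hk
          linarith [hk, this]
        have h2 := abs_nonneg (Γ x - v x)
        have h3 : Γ x - v x = 0 := abs_eq_zero.1 (le_antisymm habs h2)
        linarith
    rw [hiff]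
    refine MeasurableSet.iInter fun k => (IsOpen.measurableSet ?_)
    rw [isOpen_iff_mem_nhds]
    intro x hx
    have hΓc : ContinuousAt Γ x := hΓcont.continuousAt (hΩo.mem_nhds hx.1)
    have hvc : ContinuousAt v x := hvcont.continuousAt (hΩo.mem_nhds hx.1)
    have hcc : ContinuousAt (fun y => |Γ y - v y|) x := (hΓc.sub hvc).abs
    filter_upwards [hΩo.mem_nhds hx.1, hcc.eventually (eventually_lt_nhds hx.2)] with y h1 h2
    exact ⟨h1, h2⟩
  set A : Set (EuclideanSpace ℝ (Fin n)) := E ∩ C with hAdef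
  have hAm : MeasurableSet A := hE.inter hCm
  have hAΩ : A ⊆ Ω := fun x hx => hx.2.1
  -- the gradient is a subgradient at contact points
  have hsubg : ∀ x ∈ C, ∀ z ∈ Ω, Γ x + ⟪g x, z - x⟫ ≤ Γ z := by
    intro x hx z hz
    have h1 := grad_mem_subgradient hΩo hΓconv hΓle hx.1 hx.2 (hvd x hx.1) z hz
    have h2 : ⟪g x, z - x⟫ = F x (z - x) := InnerProductSpace.toDual_symm_apply
    rw [h2]
    exact h1
  -- set inclusions for the subgradient image
  have claim_sub : g '' A ⊆
      {p | ∃ x ∈ E, ∀ z ∈ Ω, Γ x + ⟪p, z - x⟫ ≤ Γ z} := by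
    rintro q ⟨x, hxA, rfl⟩
    exact ⟨x, hxA.1, hsubg x hxA.2⟩
  have claim_sup : {p | ∃ x ∈ E, ∀ z ∈ Ω, Γ x + ⟪p, z - x⟫ ≤ Γ z} ⊆
      g '' A ∪ N := by
    rintro p ⟨x, hxE, hpsub⟩
    by_cases hpN : p ∈ N
    · exact Or.inr hpN
    · have hd : DifferentiableAt ℝ (envConj Ω Γ) p := not_not.1 hpN
      have hxΩ := hEΩ hxE
      have hcontact : Γ x = v x :=
        contact_of_differentiableAt hΩo hΩc hΩb hΓconv hΓle hΓmax hvcont hc hxΩ hpsub hd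
      have hgrad := subgradient_eq_grad hΩo hΓle hxΩ hcontact (hvd x hxΩ) hpsub
      have hgp : g x = p := by
        have h0 : ⟪g x - p, g x - p⟫ = 0 := by
          rw [inner_sub_left]
          have h1 : ⟪g x, g x - p⟫ = F x (g x - p) := InnerProductSpace.toDual_symm_apply
          rw [h1, hgrad (g x - p)]
          ring
        rw [inner_self_eq_zero, sub_eq_zero] at h0
        exact h0
      exact Or.inl ⟨x, ⟨hxE, hxΩ, hcontact⟩, hgp⟩
  have hvol1 : volume {p | ∃ x ∈ E, ∀ z ∈ Ω, Γ x + ⟪p, z - x⟫ ≤ Γ z}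
      = volume (g '' A) := by
    refine le_antisymm ?_ (measure_mono claim_sub)
    calc volume {p | ∃ x ∈ E, ∀ z ∈ Ω, Γ x + ⟪p, z - x⟫ ≤ Γ z}
        ≤ volume (g '' A ∪ N) := measure_mono claim_sup
      _ ≤ volume (g '' A) + volume N := measure_union_le _ _
      _ = volume (g '' A) := by rw [hNnull, add_zero]
  -- injectivity off the bad set
  set A' : Set (EuclideanSpace ℝ (Fin n)) := A \ g ⁻¹' N with hA'def
  set Z : Set (EuclideanSpace ℝ (Fin n)) := A ∩ g ⁻¹' N with hZdef
  have hA'm : MeasurableSet A' := hAm.diff (hgm hNm)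
  have hZm : MeasurableSet Z := hAm.inter (hgm hNm)
  have hvol2 : volume (g '' A) = volume (g '' A') := by
    have hsplitA : g '' A ⊆ g '' A' ∪ N := by
      rintro q ⟨x, hxA, rfl⟩
      by_cases h : g x ∈ N
      · exact Or.inr h
      · exact Or.inl ⟨x, ⟨hxA, h⟩, rfl⟩
    refine le_antisymm ?_ (measure_mono (image_mono diff_subset))
    calc volume (g '' A) ≤ volume (g '' A' ∪ N) := measure_mono hsplitA
      _ ≤ volume (g '' A') + volume N := measure_union_le _ _
      _ = volume (g '' A') := by rw [hNnull, add_zero]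
  have hinjA' : InjOn g A' := by
    intro x hx y hy hxy
    have hd : DifferentiableAt ℝ (envConj Ω Γ) (g x) := not_not.1 hx.2
    have hsx := hsubg x hx.1.2
    have hsy := hsubg y hy.1.2
    rw [← hxy] at hsy
    exact envConj_point_unique hd
      (fun q => le_envConj hΩb hc q hx.1.2.1)
      ((envConj_touch hΩb hc hx.1.2.1 hsx).symm)
      (fun q => le_envConj hΩb hc q hy.1.2.1)
      ((envConj_touch hΩb hc hy.1.2.1 hsy).symm)
  have heq1 : ∫⁻ x in A', ENNReal.ofReal |(g' x).det| = volume (g '' A') :=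
    lintegral_abs_det_fderiv_eq_addHaar_image volume hA'm
      (fun x hx => (hgd x hx.1.2.1).hasFDerivWithinAt) hinjA'
  have hdetm : Measurable fun y => (g' y).det := by
    have h1 : Measurable (fderiv ℝ F) := measurable_fderiv ℝ F
    have h2 : Continuous fun (B : (EuclideanSpace ℝ (Fin n)) →L[ℝ]
        ((EuclideanSpace ℝ (Fin n)) →L[ℝ] ℝ)) => (TL.comp B).det := by
      apply ContinuousLinearMap.continuous_det.comp
      exact (ContinuousLinearMap.compL ℝ (EuclideanSpace ℝ (Fin n))
        ((EuclideanSpace ℝ (Fin n)) →L[ℝ] ℝ) (EuclideanSpace ℝ (Fin n)) TL).continuous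
    exact h2.measurable.comp h1
  have hZint : ∫⁻ x in Z, ENNReal.ofReal |(g' x).det| = 0 := by
    refine lintegral_det_eq_zero_of_image_null hZm
      (fun x hx => hgd x hx.1.2.1) (fun x hx => hgc x hx.1.2.1) hdetm ?_
    refine measure_mono_null ?_ hNnull
    calc g '' Z ⊆ g '' (g ⁻¹' N) := image_mono inter_subset_right
      _ ⊆ N := image_preimage_subset g N
  have hAsplit : ∫⁻ x in A, ENNReal.ofReal |(g' x).det|
      = (∫⁻ x in A', ENNReal.ofReal |(g' x).det|)
        + ∫⁻ x in Z, ENNReal.ofReal |(g' x).det| := by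
    rw [← lintegral_union hZm Set.disjoint_sdiff_inter]
    rw [Set.diff_union_inter]
  -- pointwise identification of the integrand on A
  have hcongr : ∀ x ∈ A, ENNReal.ofReal |(g' x).det| = ENNReal.ofReal (Hv x).det := by
    intro x hxA
    obtain ⟨hxE, hxΩ, hxc⟩ := hxA
    have hFd : HasFDerivAt F (fderiv ℝ F x) x :=
      ((hF.differentiableOn one_ne_zero).differentiableAt (hΩo.mem_nhds hxΩ)).hasFDerivAt
    have hHveq : ∀ i j, Hv x i j = fderiv ℝ F x (EuclideanSpace.single i 1)
        (EuclideanSpace.single j 1) := by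
      intro i j
      rw [hHv x hxΩ i j, (iteratedFDerivWithin_of_isOpen 2 hΩo) hxΩ,
        iteratedFDeriv_two_apply]
      simp [hFdef]
    have hsymm : ∀ a b, fderiv ℝ F x a b = fderiv ℝ F x b a := by
      intro a b
      exact second_derivative_symmetric_of_eventually
        (by filter_upwards [hΩo.mem_nhds hxΩ] with y hy; exact hvd y hy) hFd a b
    have hquad : ∀ ξ, 0 ≤ fderiv ℝ F x ξ ξ :=
      fun ξ => contact_sndDeriv_nonneg hΩo hΓconv hΓle hv hxΩ hxc ξ
    have hpsd : (Hv x).PosSemidef := matrix_posSemidef_of_bilinear hHveq hsymm hquad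
    have hdeteq : (g' x).det = (Hv x).det := by
      apply clm_det_eq_matrix_det
      intro i j
      have h1 : g' x (EuclideanSpace.single j 1)
          = T (fderiv ℝ F x (EuclideanSpace.single j 1)) := rfl
      rw [h1, euclidean_toDual_symm_apply, hHveq j i]
    rw [hdeteq, abs_of_nonneg (posSemidef_det_nonneg hpsd)]
  calc volume {p | ∃ x ∈ E, ∀ z ∈ Ω, Γ x + ⟪p, z - x⟫ ≤ Γ z}
      = volume (g '' A) := hvol1
    _ = volume (g '' A') := hvol2
    _ = ∫⁻ x in A', ENNReal.ofReal |(g' x).det| := heq1.symm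
    _ = ∫⁻ x in A, ENNReal.ofReal |(g' x).det| := by
        rw [hAsplit, hZint, add_zero]
    _ = ∫⁻ x in A, ENNReal.ofReal (Hv x).det :=
        setLIntegral_congr_fun hAm hcongr
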